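/- Under the stated hypotheses, suppose I + R_x is invertible for all x in an open interval J ⊆ (0,∞), and define the N×N-matrix-valued function T(x,y) = −C·exp(−xA)·(I + R_x)⁻¹·exp(−yA)·B for x ∈ J, y > 0. Then T is twice differentiable in each variable, the diagonal function D(x) = T(x,x) is differentiable, and T satisfies the partial differential equation ∂²T/∂x²(x,y) − ∂²T/∂y²(x,y) = −2·D′(x)·T(x,y) for x ∈ J, y > x (matrix product on the right-hand side). -/

import Mathlib

/-!
Write `E t = exp(-tA)`, `K = BC`, `G x = (I + R_x)⁻¹` and `P x = E x G x`, so that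
`T(x,y) = -C P(x) E(y) B`. Since `d/dt (E K E) = -(A E K E + E K E A)` and `E K E` decays
exponentially, `R' = -E K E` and `R` solves the Lyapunov equation `A R + R A = E K E`; hence
`G' = G E K E G`. As `(C X B)(C Y B) = C (X K Y) B`, the wave equation becomes an operator
identity in `A`, `E x`, `K`, `G x`, which, `A` commuting with `E x`, reduces to
`[A², G] = G [I + R, A²] G = G (E K E A - A E K E) G`, the last step by the Lyapunov equation.
-/

open MeasureTheory

/-- The semigroup `exp(-tA)` generated by a bounded operator `A`. -/
noncomputable def expA {H : Type*} [NormedAddCommGroup H] [InnerProductSpace ℂ H]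
    [CompleteSpace H] (A : H →L[ℂ] H) (t : ℝ) : H →L[ℂ] H :=
  NormedSpace.exp ((-(t : ℂ)) • A)

/-- `R_x = ∫_x^∞ exp(-tA)·BC·exp(-tA) dt` as a Bochner integral. -/
noncomputable def Rop {H : Type*} [NormedAddCommGroup H] [InnerProductSpace ℂ H]
    [CompleteSpace H] (A : H →L[ℂ] H) (BC : H →L[ℂ] H) (x : ℝ) : H →L[ℂ] H :=
  ∫ t in Set.Ioi x, expA A t * BC * expA A t

open Set Filter Topology

section LyapunovIntegral

variable {H : Type*} [NormedAddCommGroup H] [InnerProductSpace ℂ H] [CompleteSpace H]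
  (A : H →L[ℂ] H)

lemma expA_eq_exp_smul (t : ℝ) : expA A t = NormedSpace.exp (t • -A) := by
  rw [expA, smul_neg, ← neg_smul, ← Complex.coe_smul]
  norm_cast

lemma commute_expA (t : ℝ) : Commute A (expA A t) := by
  rw [expA_eq_exp_smul]
  exact ((Commute.refl A).neg_right.smul_right t).exp_right

lemma hasDerivAt_expA (t : ℝ) : HasDerivAt (expA A) (-(A * expA A t)) t := by
  have h := hasDerivAt_exp_smul_const (𝕂 := ℝ) (-A) t
  simp only [← expA_eq_exp_smul] at h
  rwa [mul_neg, ← (commute_expA A t).eq] at h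

lemma continuous_expA : Continuous (expA A) :=
  continuous_iff_continuousAt.2 fun t => (hasDerivAt_expA A t).continuousAt

lemma hasDerivAt_neg_mul_expA (t : ℝ) :
    HasDerivAt (fun s => -(A * expA A s)) (A * A * expA A t) t := by
  have h := ((hasDerivAt_expA A t).const_mul A).neg
  rwa [mul_neg, neg_neg, ← mul_assoc] at h

variable (K : H →L[ℂ] H) {M ε : ℝ}

lemma hasDerivAt_expA_mul_mul_expA (t : ℝ) :
    HasDerivAt (fun s => expA A s * K * expA A s)
      (-(A * (expA A t * K * expA A t) + expA A t * K * expA A t * A)) t := by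
  have hE := hasDerivAt_expA A t
  have hE' : HasDerivAt (expA A) (-(expA A t * A)) t := (commute_expA A t).eq ▸ hE
  exact ((hE.mul_const K).mul hE').congr_deriv (by noncomm_ring)

lemma norm_expA_mul_mul_expA_le (hdecay : ∀ t : ℝ, 0 ≤ t → ‖expA A t‖ ≤ M * Real.exp (-ε * t))
    {t : ℝ} (ht : 0 ≤ t) :
    ‖expA A t * K * expA A t‖ ≤ M ^ 2 * ‖K‖ * Real.exp (-(2 * ε) * t) := by
  have hE := hdecay t ht
  have hM : 0 ≤ M * Real.exp (-ε * t) := (norm_nonneg _).trans hE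
  calc ‖expA A t * K * expA A t‖ ≤ ‖expA A t‖ * ‖K‖ * ‖expA A t‖ := norm_mul₃_le
    _ ≤ M * Real.exp (-ε * t) * ‖K‖ * (M * Real.exp (-ε * t)) := by gcongr
    _ = M ^ 2 * ‖K‖ * Real.exp (-(2 * ε) * t) := by
      rw [show -(2 * ε) * t = -ε * t + -ε * t by ring, Real.exp_add]
      ring

lemma integrableOn_expA_mul_mul_expA (hε : 0 < ε)
    (hdecay : ∀ t : ℝ, 0 ≤ t → ‖expA A t‖ ≤ M * Real.exp (-ε * t)) (x : ℝ) :
    IntegrableOn (fun t => expA A t * K * expA A t) (Ioi x) := by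
  have hcont : Continuous fun t => expA A t * K * expA A t :=
    ((continuous_expA A).mul continuous_const).mul (continuous_expA A)
  have hpos : IntegrableOn (fun t => expA A t * K * expA A t) (Ioi 0) := by
    refine Integrable.mono' ((exp_neg_integrableOn_Ioi 0 (by positivity : 0 < 2 * ε)).const_mul
      (M ^ 2 * ‖K‖)) hcont.aestronglyMeasurable.restrict ?_
    filter_upwards [ae_restrict_mem measurableSet_Ioi] with t ht
    exact norm_expA_mul_mul_expA_le A K hdecay (le_of_lt ht)
  refine ((hcont.integrableOn_Icc (a := x) (b := 0)).union hpos).mono_set fun t ht => ?_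
  exact (le_or_gt t 0).imp (fun h => ⟨le_of_lt ht, h⟩) id

lemma tendsto_expA_mul_mul_expA_atTop (hε : 0 < ε)
    (hdecay : ∀ t : ℝ, 0 ≤ t → ‖expA A t‖ ≤ M * Real.exp (-ε * t)) :
    Tendsto (fun t => expA A t * K * expA A t) atTop (𝓝 0) := by
  have hbound : Tendsto (fun t => M ^ 2 * ‖K‖ * Real.exp (-(2 * ε) * t)) atTop (𝓝 0) := by
    simpa using (Real.tendsto_exp_atBot.comp
      (tendsto_id.const_mul_atTop_of_neg (by linarith : -(2 * ε) < 0))).const_mul (M ^ 2 * ‖K‖)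
  refine squeeze_zero_norm' ?_ hbound
  filter_upwards [eventually_ge_atTop 0] with t ht
  exact norm_expA_mul_mul_expA_le A K hdecay ht

lemma hasDerivAt_Rop (hε : 0 < ε)
    (hdecay : ∀ t : ℝ, 0 ≤ t → ‖expA A t‖ ≤ M * Real.exp (-ε * t)) (x : ℝ) :
    HasDerivAt (Rop A K) (-(expA A x * K * expA A x)) x := by
  have hint := integrableOn_expA_mul_mul_expA A K hε hdecay
  have hR : Rop A K = fun z => Rop A K 0 - ∫ t in 0..z, expA A t * K * expA A t := by
    funext z
    unfold Rop
    rw [← intervalIntegral.integral_Ioi_sub_Ioi' (hint 0) (hint z), sub_sub_cancel]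
  rw [hR]
  exact ((((continuous_expA A).mul continuous_const).mul (continuous_expA A)
    ).integral_hasStrictDerivAt 0 x).hasDerivAt.const_sub _

lemma mul_Rop_add_Rop_mul (hε : 0 < ε)
    (hdecay : ∀ t : ℝ, 0 ≤ t → ‖expA A t‖ ≤ M * Real.exp (-ε * t)) (x : ℝ) :
    A * Rop A K x + Rop A K x * A = expA A x * K * expA A x := by
  have hint := integrableOn_expA_mul_mul_expA A K hε hdecay x
  have hFTC := integral_Ioi_of_hasDerivAt_of_tendsto'
    (fun t _ => hasDerivAt_expA_mul_mul_expA A K t)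
    ((hint.const_mul A).add (hint.mul_const A)).neg (tendsto_expA_mul_mul_expA_atTop A K hε hdecay)
  rwa [integral_neg, integral_add (hint.const_mul A) (hint.mul_const A),
    integral_const_mul_of_integrable hint, integral_mul_const_of_integrable hint, zero_sub,
    neg_inj] at hFTC

end LyapunovIntegral

lemma Ring.mul_inverse_sub_inverse_mul {R : Type*} [Ring R] {u : R} (hu : IsUnit u) (X : R) :
    X * Ring.inverse u - Ring.inverse u * X
      = Ring.inverse u * (u * X - X * u) * Ring.inverse u := by
  calc X * Ring.inverse u - Ring.inverse u * X
      = (Ring.inverse u * u) * X * Ring.inverse u - Ring.inverse u * X * (u * Ring.inverse u) := by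
        rw [Ring.inverse_mul_cancel _ hu, Ring.mul_inverse_cancel _ hu, one_mul, mul_one]
    _ = Ring.inverse u * (u * X - X * u) * Ring.inverse u := by noncomm_ring

lemma HasDerivAt.ringInverse {𝕜 R : Type*} [NontriviallyNormedField 𝕜] [NormedRing R]
    [NormedAlgebra 𝕜 R] [CompleteSpace R] {u : 𝕜 → R} {u' : R} {x : 𝕜}
    (hu : HasDerivAt u u' x) (hx : IsUnit (u x)) :
    HasDerivAt (fun z => Ring.inverse (u z))
      (-(Ring.inverse (u x) * u' * Ring.inverse (u x))) x := by
  obtain ⟨w, hw⟩ := hx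
  have hinv := hasFDerivAt_ringInverse (𝕜 := 𝕜) w
  rw [hw] at hinv
  refine (hinv.comp_hasDerivAt x hu).congr_deriv ?_
  rw [← hw, Ring.inverse_unit]
  simp

section Sandwich

variable {H U V : Type*} [NormedAddCommGroup H] [NormedSpace ℂ H]
  [NormedAddCommGroup U] [NormedSpace ℂ U] [NormedAddCommGroup V] [NormedSpace ℂ V]

noncomputable def sandwich (C : H →L[ℂ] V) (B : U →L[ℂ] H) : (H →L[ℂ] H) →L[ℂ] U →L[ℂ] V :=
  (ContinuousLinearMap.compL ℂ U H V C).comp ((ContinuousLinearMap.compL ℂ U H H).flip B)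

lemma sandwich_mul_sandwich (C : H →L[ℂ] U) (B : U →L[ℂ] H) (P Q : H →L[ℂ] H) :
    sandwich C B P * sandwich C B Q = sandwich C B (P * (B ∘L C) * Q) := rfl

lemma HasDerivAt.sandwich {f : ℝ → H →L[ℂ] H} {f' : H →L[ℂ] H} {x : ℝ} (hf : HasDerivAt f f' x)
    (C : H →L[ℂ] V) (B : U →L[ℂ] H) :
    HasDerivAt (fun t => _root_.sandwich C B (f t)) (_root_.sandwich C B f') x :=
  ((_root_.sandwich C B).hasFDerivAt.restrictScalars ℝ).comp_hasDerivAt x hf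

end Sandwich

section TauFactor

variable {H : Type*} [NormedAddCommGroup H] [InnerProductSpace ℂ H] [CompleteSpace H]
  (A K : H →L[ℂ] H) {M ε : ℝ}

noncomputable def invOneAddRop (x : ℝ) : H →L[ℂ] H := Ring.inverse (1 + Rop A K x)

noncomputable def tauFactor (x : ℝ) : H →L[ℂ] H := expA A x * invOneAddRop A K x

noncomputable def tauFactorDeriv (x : ℝ) : H →L[ℂ] H :=
  -(A * tauFactor A K x) + tauFactor A K x * (expA A x * K * expA A x) * invOneAddRop A K x

noncomputable def tauFactorDeriv2 (x : ℝ) : H →L[ℂ] H :=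
  -(A * tauFactorDeriv A K x)
    + tauFactorDeriv A K x * (expA A x * K * expA A x) * invOneAddRop A K x
    - tauFactor A K x * (A * (expA A x * K * expA A x) + expA A x * K * expA A x * A)
        * invOneAddRop A K x
    + tauFactor A K x * (expA A x * K * expA A x)
        * (invOneAddRop A K x * (expA A x * K * expA A x) * invOneAddRop A K x)

variable {x : ℝ}

lemma hasDerivAt_invOneAddRop (hε : 0 < ε)
    (hdecay : ∀ t : ℝ, 0 ≤ t → ‖expA A t‖ ≤ M * Real.exp (-ε * t))
    (hx : IsUnit (1 + Rop A K x)) :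
    HasDerivAt (invOneAddRop A K)
      (invOneAddRop A K x * (expA A x * K * expA A x) * invOneAddRop A K x) x :=
  (((hasDerivAt_Rop A K hε hdecay x).const_add 1).ringInverse hx).congr_deriv (by noncomm_ring)

lemma hasDerivAt_tauFactor (hε : 0 < ε)
    (hdecay : ∀ t : ℝ, 0 ≤ t → ‖expA A t‖ ≤ M * Real.exp (-ε * t))
    (hx : IsUnit (1 + Rop A K x)) :
    HasDerivAt (tauFactor A K) (tauFactorDeriv A K x) x :=
  ((hasDerivAt_expA A x).mul (hasDerivAt_invOneAddRop A K hε hdecay hx)).congr_deriv <| by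
    simp only [tauFactorDeriv, tauFactor]
    noncomm_ring

lemma hasDerivAt_tauFactorDeriv (hε : 0 < ε)
    (hdecay : ∀ t : ℝ, 0 ≤ t → ‖expA A t‖ ≤ M * Real.exp (-ε * t))
    (hx : IsUnit (1 + Rop A K x)) :
    HasDerivAt (tauFactorDeriv A K) (tauFactorDeriv2 A K x) x := by
  have hP := hasDerivAt_tauFactor A K hε hdecay hx
  have hG := hasDerivAt_invOneAddRop A K hε hdecay hx
  exact (((hP.const_mul A).neg).add ((hP.mul (hasDerivAt_expA_mul_mul_expA A K x)).mul hG)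
    ).congr_deriv (by simp only [tauFactorDeriv2]; noncomm_ring)

lemma tauFactorDeriv2_wave_identity (hε : 0 < ε)
    (hdecay : ∀ t : ℝ, 0 ≤ t → ‖expA A t‖ ≤ M * Real.exp (-ε * t))
    (hx : IsUnit (1 + Rop A K x)) (y : ℝ) :
    tauFactorDeriv2 A K x * expA A y - tauFactor A K x * (A * A * expA A y)
      = (2 : ℂ) • ((tauFactorDeriv A K x * expA A x + tauFactor A K x * -(A * expA A x)) * K
          * (tauFactor A K x * expA A y)) := by
  have hsq : A * A * invOneAddRop A K x - invOneAddRop A K x * (A * A)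
      = invOneAddRop A K x * (expA A x * K * expA A x * A - A * (expA A x * K * expA A x))
        * invOneAddRop A K x := by
    rw [invOneAddRop, Ring.mul_inverse_sub_inverse_mul hx, ← mul_Rop_add_Rop_mul A K hε hdecay x]
    noncomm_ring
  have hcomm : A * A * expA A x = expA A x * (A * A) :=
    ((commute_expA A x).mul_left (commute_expA A x)).eq
  simp only [tauFactorDeriv2, tauFactorDeriv, tauFactor]
  set E := expA A x
  set G := invOneAddRop A K x
  have hkey : A * A * E * G - E * G * (A * A) = E * G * (E * K * E * A - A * (E * K * E)) * G := by
    calc A * A * E * G - E * G * (A * A) = E * (A * A * G - G * (A * A)) := by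
          rw [hcomm]; noncomm_ring
      _ = E * G * (E * K * E * A - A * (E * K * E)) * G := by rw [hsq]; noncomm_ring
  rw [two_smul, ← sub_eq_zero]
  calc _ = (A * A * E * G - E * G * (A * A) - E * G * (E * K * E * A - A * (E * K * E)) * G)
        * expA A y := by noncomm_ring
    _ = 0 := by rw [hkey, sub_self, zero_mul]

end TauFactor

theorem matrix_tau_wave_equation_general
    {H : Type*} [NormedAddCommGroup H] [InnerProductSpace ℂ H] [CompleteSpace H]
    (N : ℕ)
    (A : H →L[ℂ] H) (B : EuclideanSpace ℂ (Fin N) →L[ℂ] H)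
    (C : H →L[ℂ] EuclideanSpace ℂ (Fin N))
    (M ε : ℝ) (hε : 0 < ε)
    (hdecay : ∀ t : ℝ, 0 ≤ t → ‖expA A t‖ ≤ M * Real.exp (-ε * t))
    (J : Set ℝ)
    (hinv : ∀ x ∈ J, IsUnit (1 + Rop A (B ∘L C) x))
    (T : ℝ → ℝ → EuclideanSpace ℂ (Fin N) →L[ℂ] EuclideanSpace ℂ (Fin N))
    (hT : ∀ x y : ℝ, T x y =
      -(C ∘L expA A x ∘L Ring.inverse (1 + Rop A (B ∘L C) x) ∘L expA A y ∘L B)) :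
    ∃ Tx Txx Ty Tyy :
        ℝ → ℝ → EuclideanSpace ℂ (Fin N) →L[ℂ] EuclideanSpace ℂ (Fin N),
      ∃ D' : ℝ → EuclideanSpace ℂ (Fin N) →L[ℂ] EuclideanSpace ℂ (Fin N),
        (∀ x ∈ J, ∀ y : ℝ, 0 < y →
          HasDerivAt (fun x' : ℝ => T x' y) (Tx x y) x ∧
          HasDerivAt (fun x' : ℝ => Tx x' y) (Txx x y) x ∧
          HasDerivAt (fun y' : ℝ => T x y') (Ty x y) y ∧
          HasDerivAt (fun y' : ℝ => Ty x y') (Tyy x y) y) ∧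
        (∀ x ∈ J, HasDerivAt (fun s : ℝ => T s s) (D' x) x) ∧
        (∀ x ∈ J, ∀ y : ℝ, x < y →
          Txx x y - Tyy x y = (-2 : ℂ) • (D' x * T x y)) := by
  set K := B ∘L C
  obtain rfl : T = fun x y => -sandwich C B (tauFactor A K x * expA A y) := funext₂ hT
  refine ⟨fun x y => -sandwich C B (tauFactorDeriv A K x * expA A y),
    fun x y => -sandwich C B (tauFactorDeriv2 A K x * expA A y),
    fun x y => -sandwich C B (tauFactor A K x * -(A * expA A y)),
    fun x y => -sandwich C B (tauFactor A K x * (A * A * expA A y)),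
    fun x => -sandwich C B (tauFactorDeriv A K x * expA A x + tauFactor A K x * -(A * expA A x)),
    fun x hx y _ => ⟨?_, ?_, ?_, ?_⟩, fun x hx => ?_, fun x hx y _ => ?_⟩
  · exact (((hasDerivAt_tauFactor A K hε hdecay (hinv x hx)).mul_const _).sandwich C B).neg
  · exact (((hasDerivAt_tauFactorDeriv A K hε hdecay (hinv x hx)).mul_const _).sandwich C B).neg
  · exact (((hasDerivAt_expA A y).const_mul _).sandwich C B).neg
  · exact (((hasDerivAt_neg_mul_expA A y).const_mul _).sandwich C B).neg
  · exact (((hasDerivAt_tauFactor A K hε hdecay (hinv x hx)).mul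
      (hasDerivAt_expA A x)).sandwich C B).neg
  · dsimp only
    -- `rw [neg_mul_neg]` alone misses the ring structure on operators of `EuclideanSpace`
    rw [neg_mul_neg (sandwich C B _), sandwich_mul_sandwich, ← map_neg, ← map_neg, ← map_sub,
      ← map_smul, neg_sub_neg, ← neg_sub, tauFactorDeriv2_wave_identity A K hε hdecay (hinv x hx),
      ← neg_smul]

/-- With `B : ℂᴺ → H`, `C : H → ℂᴺ`, `R_x` as above invertible plus `I` on an open interval
`J ⊆ (0,∞)`, the `N×N`-matrix-valued function
`T(x,y) = −C·exp(−xA)·(I + R_x)⁻¹·exp(−yA)·B` is twice differentiable in each variable,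
its diagonal `D(x) = T(x,x)` is differentiable, and `T` satisfies
`∂²T/∂x² − ∂²T/∂y² = −2·D′(x)·T(x,y)` for `x ∈ J`, `y > x`. -/
theorem matrix_tau_wave_equation
    {H : Type*} [NormedAddCommGroup H] [InnerProductSpace ℂ H] [CompleteSpace H]
    (N : ℕ) (hN : 0 < N)
    (A : H →L[ℂ] H) (B : EuclideanSpace ℂ (Fin N) →L[ℂ] H)
    (C : H →L[ℂ] EuclideanSpace ℂ (Fin N))
    (M ε : ℝ) (hM : 0 < M) (hε : 0 < ε)
    (hdecay : ∀ t : ℝ, 0 ≤ t → ‖expA A t‖ ≤ M * Real.exp (-ε * t))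
    (J : Set ℝ) (hJopen : IsOpen J) (hJsub : J ⊆ Set.Ioi (0 : ℝ))
    (hinv : ∀ x ∈ J, IsUnit (1 + Rop A (B ∘L C) x))
    (T : ℝ → ℝ → EuclideanSpace ℂ (Fin N) →L[ℂ] EuclideanSpace ℂ (Fin N))
    (hT : ∀ x y : ℝ, T x y =
      -(C ∘L expA A x ∘L Ring.inverse (1 + Rop A (B ∘L C) x) ∘L expA A y ∘L B)) :
    ∃ Tx Txx Ty Tyy :
        ℝ → ℝ → EuclideanSpace ℂ (Fin N) →L[ℂ] EuclideanSpace ℂ (Fin N),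
      ∃ D' : ℝ → EuclideanSpace ℂ (Fin N) →L[ℂ] EuclideanSpace ℂ (Fin N),
        (∀ x ∈ J, ∀ y : ℝ, 0 < y →
          HasDerivAt (fun x' : ℝ => T x' y) (Tx x y) x ∧
          HasDerivAt (fun x' : ℝ => Tx x' y) (Txx x y) x ∧
          HasDerivAt (fun y' : ℝ => T x y') (Ty x y) y ∧
          HasDerivAt (fun y' : ℝ => Ty x y') (Tyy x y) y) ∧
        (∀ x ∈ J, HasDerivAt (fun s : ℝ => T s s) (D' x) x) ∧
        (∀ x ∈ J, ∀ y : ℝ, x < y →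
          Txx x y - Tyy x y = (-2 : ℂ) • (D' x * T x y)) :=
  matrix_tau_wave_equation_general N A B C M ε hε hdecay J hinv T hT
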